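/- arXiv:2201.05431 — 3 statements merged into one kernel-verified Lean document; each statement's English description precedes it below -/
import Mathlib

section
/- Let ι be a finite type and let A : ℝ → Matrix ι ι ℝ be continuous such that for every t: A(t)_{ij} ≥ 0 for all i ≠ j and ∑_i A(t)_{ij} = 0 for every j. Let t₀ ∈ ℝ and let π : ℝ → (ι → ℝ) solve π'(t) = A(t) π(t) for t ≥ t₀ with π(t₀) entrywise nonnegative. Let S ⊆ ι, let Â(t) be the submatrix of A(t) with rows and columns restricted to S, and let π̂ : ℝ → (S → ℝ) solve π̂'(t) = Â(t) π̂(t) for t ≥ t₀ with π̂(t₀) equal to the restriction of π(t₀) to S. Then for all t ≥ t₀ and all i ∈ S: 0 ≤ π̂_i(t) ≤ π_i(t). -/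
/-!
Off-diagonal nonnegativity (the Metzler property) is what makes the nonnegative orthant
invariant: at the first time a component of a solution of `y' = M y + g` touches zero, all
other components are still nonnegative, so `y_i' = ∑_{j ≠ i} M_ij y_j + g_i ≥ 0`, and strictly
so if `g > 0`; an exponentially growing perturbation reduces the general case to the strict one.
The gap `π|_S - π̂` solves the truncated equation forced by the inflow `∑_{j ∉ S} A_ij π_j ≥ 0`
from the discarded states, so it stays nonnegative, as does `π̂` itself.
-/

open Matrix Finset

def Matrix.IsMetzler {ι R : Type*} [Zero R] [LE R] (M : Matrix ι ι R) : Prop :=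
  ∀ i j, i ≠ j → 0 ≤ M i j

namespace Matrix.IsMetzler

variable {ι κ R : Type*}

theorem submatrix [Zero R] [LE R] {M : Matrix ι ι R} (hM : M.IsMetzler) {e : κ → ι}
    (he : Function.Injective e) : (M.submatrix e e).IsMetzler :=
  fun i j hij => hM (e i) (e j) (he.ne hij)

theorem mulVec_apply_nonneg [Fintype ι] [Semiring R] [PartialOrder R] [IsOrderedRing R]
    {M : Matrix ι ι R} (hM : M.IsMetzler) {v : ι → R} (hv : ∀ j, 0 ≤ v j) {i : ι}
    (hvi : v i = 0) : 0 ≤ (M *ᵥ v) i := by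
  refine Finset.sum_nonneg fun j _ => ?_
  rcases eq_or_ne i j with rfl | hij
  · simp [hvi]
  · exact mul_nonneg (hM i j hij) (hv j)

end Matrix.IsMetzler

theorem Matrix.mulVec_apply_eq_submatrix_mulVec_add_sum_compl {ι R : Type*} [Fintype ι]
    [DecidableEq ι] [NonUnitalNonAssocSemiring R] (A : Matrix ι ι R) (v : ι → R) (S : Finset ι)
    (i : S) :
    (A *ᵥ v) i = (A.submatrix (↑) (↑) *ᵥ fun j : S => v j) i + ∑ j ∈ Sᶜ, A i j * v j := by
  simp only [mulVec, dotProduct, submatrix_apply]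
  rw [Finset.sum_coe_sort S (fun j => A i j * v j), Finset.sum_add_sum_compl]

open Set

theorem HasDerivWithinAt.nonpos_of_isMinOn_Icc {f : ℝ → ℝ} {f' a b : ℝ} {s : Set ℝ}
    (hf : HasDerivWithinAt f f' s b) (hs : Icc a b ⊆ s) (hab : a < b)
    (hmin : IsMinOn f (Icc a b) b) : f' ≤ 0 := by
  have hcone : a - b ∈ posTangentConeAt (Icc a b) b :=
    sub_mem_posTangentConeAt_of_segment_subset (by rw [segment_symm, segment_eq_Icc hab.le])
  have := hmin.localize.hasFDerivWithinAt_nonneg ((hf.mono hs).hasFDerivWithinAt) hcone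
  rw [ContinuousLinearMap.toSpanSingleton_apply, smul_eq_mul] at this
  exact nonpos_of_mul_nonneg_right this (sub_neg.2 hab)

theorem exists_first_zero_of_continuousOn {ι : Type*} [Finite ι] {z : ℝ → ι → ℝ} {a b : ℝ}
    (hz : ContinuousOn z (Icc a b)) (hz0 : ∀ i, 0 < z a i)
    (hneg : ∃ t ∈ Icc a b, ∃ i, z t i ≤ 0) :
    ∃ τ ∈ Ioc a b, (∀ t ∈ Icc a τ, ∀ j, 0 ≤ z t j) ∧ ∃ i, z τ i = 0 := by
  set E := Icc a b ∩ z ⁻¹' {v | ∃ i, v i ≤ 0}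
  have hE_closed : IsClosed E := by
    refine hz.preimage_isClosed_of_isClosed isClosed_Icc ?_
    simpa only [ofPred_exists] using
      isClosed_iUnion_of_finite fun i => isClosed_le (continuous_apply i) continuous_const
  have hE_bdd : BddBelow E := ⟨a, fun t ht => ht.1.1⟩
  have hE_ne : E.Nonempty := by
    obtain ⟨t, ht, i, hi⟩ := hneg
    exact ⟨t, ht, i, hi⟩
  set τ := sInf E
  obtain ⟨hτ_mem, i, hi⟩ : τ ∈ E := hE_closed.csInf_mem hE_ne hE_bdd
  have haτ : a < τ := hτ_mem.1.lt_of_ne fun h => (hz0 i).not_ge (h ▸ hi)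
  have hpos : ∀ t ∈ Ico a τ, ∀ j, 0 < z t j := by
    intro t ht j
    by_contra! h
    exact ht.2.not_ge (csInf_le hE_bdd ⟨⟨ht.1, ht.2.le.trans hτ_mem.2⟩, j, h⟩)
  have hnonneg : ∀ t ∈ Icc a τ, ∀ j, 0 ≤ z t j := by
    intro t ht j
    have hF : IsClosed (Icc a τ ∩ (fun t => z t j) ⁻¹' Ici 0) :=
      ((continuous_apply j).comp_continuousOn (hz.mono (Icc_subset_Icc_right hτ_mem.2))
        ).preimage_isClosed_of_isClosed isClosed_Icc isClosed_Ici
    have hsub : Ico a τ ⊆ Icc a τ ∩ (fun t => z t j) ⁻¹' Ici 0 :=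
      fun t ht => ⟨Ico_subset_Icc_self ht, (hpos t ht j).le⟩
    have hcl := closure_minimal hsub hF
    rw [closure_Ico haτ.ne] at hcl
    exact (hcl ht).2
  exact ⟨τ, ⟨haτ, hτ_mem.2⟩, hnonneg, i, le_antisymm hi (hnonneg τ ⟨haτ.le, le_rfl⟩ i)⟩

section MetzlerFlow

variable {ι : Type*} [Fintype ι] {M : ℝ → Matrix ι ι ℝ}

theorem pos_of_hasDerivWithinAt_mulVec_add_pos {g z : ℝ → ι → ℝ} {a b : ℝ}
    (hM : ∀ t ∈ Icc a b, (M t).IsMetzler) (hg : ∀ t ∈ Icc a b, ∀ i, 0 < g t i)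
    (hz : ∀ t ∈ Icc a b, HasDerivWithinAt z (M t *ᵥ z t + g t) (Icc a b) t)
    (hz0 : ∀ i, 0 < z a i) :
    ∀ t ∈ Icc a b, ∀ i, 0 < z t i := by
  by_contra! hneg
  obtain ⟨τ, hτ, hnonneg, i, hzero⟩ := exists_first_zero_of_continuousOn
    (fun t ht => (hz t ht).continuousWithinAt) hz0 hneg
  have hτ_mem : τ ∈ Icc a b := Ioc_subset_Icc_self hτ
  have hderiv_nonpos : (M τ *ᵥ z τ + g τ) i ≤ 0 :=
    (hasDerivWithinAt_pi.1 (hz τ hτ_mem) i).nonpos_of_isMinOn_Icc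
      (Icc_subset_Icc_right hτ.2) hτ.1 fun t ht => by simpa [hzero] using hnonneg t ht i
  have hflow_nonneg : 0 ≤ (M τ *ᵥ z τ) i :=
    (hM τ hτ_mem).mulVec_apply_nonneg (hnonneg τ ⟨hτ.1.le, le_rfl⟩) hzero
  have := hg τ hτ_mem i
  rw [Pi.add_apply] at hderiv_nonpos
  linarith

theorem nonneg_of_hasDerivWithinAt_mulVec_add {f y : ℝ → ι → ℝ} {t₀ : ℝ}
    (hM_cont : ContinuousOn M (Ici t₀)) (hM : ∀ t, t₀ ≤ t → (M t).IsMetzler)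
    (hf : ∀ t, t₀ ≤ t → ∀ i, 0 ≤ f t i)
    (hy : ∀ t, t₀ ≤ t → HasDerivWithinAt y (M t *ᵥ y t + f t) (Ici t₀) t)
    (hy0 : ∀ i, 0 ≤ y t₀ i) :
    ∀ t, t₀ ≤ t → ∀ i, 0 ≤ y t i := by
  intro t₁ ht₁ i
  obtain ⟨C, hC⟩ : ∃ C, ∀ t ∈ Icc t₀ t₁, ‖M t *ᵥ 1‖ ≤ C :=
    isCompact_Icc.exists_bound_of_continuousOn <|
      (continuous_id.matrix_mulVec continuous_const).comp_continuousOn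
        (hM_cont.mono Icc_subset_Ici_self)
  set K := C + 1
  refine le_of_forall_pos_lt_add fun δ hδ => ?_
  -- Since `K` exceeds every row sum of `M t`, adding `e t • 1` makes the forcing strictly positive.
  set ε := δ / Real.exp (K * (t₁ - t₀))
  set e : ℝ → ℝ := fun t => ε * Real.exp (K * (t - t₀))
  have he : ∀ t, HasDerivAt e (e t * K) t := fun t => by
    simpa [e, mul_assoc] using
      ((((hasDerivAt_id t).sub_const t₀).const_mul K).exp).const_mul ε
  have he_pos : ∀ t, 0 < e t := fun t => mul_pos (div_pos hδ (Real.exp_pos _)) (Real.exp_pos _)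
  have hpos := pos_of_hasDerivWithinAt_mulVec_add_pos (M := M) (a := t₀) (b := t₁)
    (g := fun t => f t + e t • (K • 1 - M t *ᵥ 1)) (z := fun t => y t + e t • 1)
    (fun t ht => hM t ht.1) (fun t ht j => ?_) (fun t ht => ?_) (fun j => ?_) t₁ ⟨ht₁, le_rfl⟩ i
  · simpa [e, ε] using hpos
  · have hMj : (M t *ᵥ 1) j ≤ C :=
      (Real.le_norm_self _).trans ((norm_le_pi_norm _ j).trans (hC t ht))
    have := hf t ht.1 j
    have := he_pos t
    simp only [Pi.add_apply, Pi.smul_apply, Pi.sub_apply, Pi.one_apply, smul_eq_mul, mul_one]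
    nlinarith
  · have := ((hy t ht.1).mono (Icc_subset_Ici_self : Icc t₀ t₁ ⊆ _)).add
      ((he t).hasDerivWithinAt.smul_const (1 : ι → ℝ))
    refine this.congr_deriv ?_
    rw [mulVec_add, mulVec_smul, smul_sub, smul_smul]
    abel
  · simpa using add_pos_of_nonneg_of_pos (hy0 j) (he_pos t₀)

theorem nonneg_of_hasDerivWithinAt_mulVec {y : ℝ → ι → ℝ} {t₀ : ℝ}
    (hM_cont : ContinuousOn M (Ici t₀)) (hM : ∀ t, t₀ ≤ t → (M t).IsMetzler)
    (hy : ∀ t, t₀ ≤ t → HasDerivWithinAt y (M t *ᵥ y t) (Ici t₀) t)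
    (hy0 : ∀ i, 0 ≤ y t₀ i) :
    ∀ t, t₀ ≤ t → ∀ i, 0 ≤ y t i :=
  nonneg_of_hasDerivWithinAt_mulVec_add hM_cont hM (f := 0) (fun _ _ _ => le_rfl)
    (fun t ht => by simpa using hy t ht) hy0

end MetzlerFlow

theorem hasDerivWithinAt_sub_truncated {ι : Type*} [Fintype ι] [DecidableEq ι]
    {A : Matrix ι ι ℝ} {S : Finset ι} {π : ℝ → ι → ℝ} {πhat : ℝ → S → ℝ} {s : Set ℝ} {t : ℝ}
    (hπ : HasDerivWithinAt π (A *ᵥ π t) s t)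
    (hπhat : HasDerivWithinAt πhat (A.submatrix (↑) (↑) *ᵥ πhat t) s t) :
    HasDerivWithinAt (fun u (i : S) => π u i - πhat u i)
      (A.submatrix (↑) (↑) *ᵥ ((fun i : S => π t i) - πhat t) +
        fun i : S => ∑ j ∈ Sᶜ, A i j * π t j) s t := by
  refine hasDerivWithinAt_pi.2 fun i =>
    ((hasDerivWithinAt_pi.1 hπ i).sub (hasDerivWithinAt_pi.1 hπhat i)).congr_deriv ?_
  rw [mulVec_apply_eq_submatrix_mulVec_add_sum_compl A (π t) S i, mulVec_sub]
  simp only [Pi.add_apply, Pi.sub_apply]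
  ring

theorem cme_truncation_domination_general
    {ι : Type*} [Fintype ι]
    (A : ℝ → Matrix ι ι ℝ) (hA : Continuous A)
    (hoff : ∀ (t : ℝ) (i j : ι), i ≠ j → 0 ≤ A t i j)
    (t₀ : ℝ) (π : ℝ → ι → ℝ)
    (hπ : ∀ t : ℝ, t₀ ≤ t → HasDerivWithinAt π (A t *ᵥ π t) (Set.Ici t₀) t)
    (hπ0 : ∀ i : ι, 0 ≤ π t₀ i)
    (S : Finset ι)
    (Ahat : ℝ → Matrix S S ℝ)
    (hAhat : ∀ (t : ℝ) (i j : S), Ahat t i j = A t i j)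
    (πhat : ℝ → S → ℝ)
    (hπhat : ∀ t : ℝ, t₀ ≤ t →
      HasDerivWithinAt πhat (Ahat t *ᵥ πhat t) (Set.Ici t₀) t)
    (hπhat0 : ∀ i : S, πhat t₀ i = π t₀ i) :
    ∀ t : ℝ, t₀ ≤ t → ∀ i : S, 0 ≤ πhat t i ∧ πhat t i ≤ π t i := by
  classical
  obtain rfl : Ahat = fun t => (A t).submatrix (↑) (↑) := funext fun t => Matrix.ext (hAhat t)
  have hAS : ∀ t, t₀ ≤ t → ((A t).submatrix ((↑) : S → ι) ((↑) : S → ι)).IsMetzler :=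
    fun t _ => IsMetzler.submatrix (hoff t) Subtype.val_injective
  have hAS_cont : ContinuousOn (fun t => (A t).submatrix ((↑) : S → ι) ((↑) : S → ι)) (Ici t₀) :=
    (hA.matrix_submatrix _ _).continuousOn
  have hπ_nonneg := nonneg_of_hasDerivWithinAt_mulVec hA.continuousOn (fun t _ => hoff t) hπ hπ0
  have hπhat_nonneg :=
    nonneg_of_hasDerivWithinAt_mulVec hAS_cont hAS hπhat fun i => hπhat0 i ▸ hπ0 i
  have hgap_nonneg := nonneg_of_hasDerivWithinAt_mulVec_add hAS_cont hAS
    (fun t ht i => Finset.sum_nonneg fun j hj =>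
      mul_nonneg (hoff t i j fun h => Finset.mem_compl.1 hj (h ▸ i.2)) (hπ_nonneg t ht j))
    (fun t ht => hasDerivWithinAt_sub_truncated (hπ t ht) (hπhat t ht))
    (fun i => (sub_eq_zero.2 (hπhat0 i).symm).ge)
  exact fun t ht i => ⟨hπhat_nonneg t ht i, sub_nonneg.1 (hgap_nonneg t ht i)⟩

/-- Truncation domination for a time-inhomogeneous master equation: the solution of
the dynamics restricted to a subset `S` of states stays nonnegative and is dominated
componentwise by the exact solution. -/
theorem cme_truncation_domination
    {ι : Type*} [Fintype ι] [DecidableEq ι]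
    (A : ℝ → Matrix ι ι ℝ) (hA : Continuous A)
    (hoff : ∀ (t : ℝ) (i j : ι), i ≠ j → 0 ≤ A t i j)
    (hcol : ∀ (t : ℝ) (j : ι), ∑ i, A t i j = 0)
    (t₀ : ℝ) (π : ℝ → ι → ℝ)
    (hπ : ∀ t : ℝ, t₀ ≤ t → HasDerivWithinAt π (A t *ᵥ π t) (Set.Ici t₀) t)
    (hπ0 : ∀ i : ι, 0 ≤ π t₀ i)
    (S : Finset ι)
    (Ahat : ℝ → Matrix S S ℝ)
    (hAhat : ∀ (t : ℝ) (i j : S), Ahat t i j = A t i j)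
    (πhat : ℝ → S → ℝ)
    (hπhat : ∀ t : ℝ, t₀ ≤ t →
      HasDerivWithinAt πhat (Ahat t *ᵥ πhat t) (Set.Ici t₀) t)
    (hπhat0 : ∀ i : S, πhat t₀ i = π t₀ i) :
    ∀ t : ℝ, t₀ ≤ t → ∀ i : S, 0 ≤ πhat t i ∧ πhat t i ≤ π t i :=
  cme_truncation_domination_general A hA hoff t₀ π hπ hπ0 S Ahat hAhat πhat hπhat hπhat0
end

section
/- Let ι be a finite type, let A : ℝ → Matrix ι ι ℝ be continuous such that for every t: A(t)_{ij} ≥ 0 for i ≠ j and ∑_i A(t)_{ij} = 0 for every j, and let f : ι → ℕ be a level function such that A(t)_{ij} = 0 whenever i ≠ j and f(i) > f(j) (no transition increases the level). Let π : ℝ → (ι → ℝ) solve π'(t) = A(t) π(t) with π(t₀) entrywise nonnegative. Then for every n₀ ∈ ℕ, the upper tail t ↦ ∑_{i : f(i) ≥ n₀} π_i(t) is nonincreasing on [t₀, ∞), and the lower tail t ↦ ∑_{i : f(i) ≤ n₀} π_i(t) is nondecreasing on [t₀, ∞). -/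
/-!
For a set `S` of states, `d/dt ∑_{i ∈ S} π_i = ∑_j (∑_{i ∈ S} A_ij) π_j`. If no transition enters
`S` (an upper tail of the level), the inner sum vanishes for `j ∉ S` and equals minus the outflow
for `j ∈ S`, so it is `≤ 0`; since the columns of `A` sum to zero, the complement of such a set
(a lower tail) gains mass. Both signs need `π ≥ 0`, which is a barrier argument: `π` lifted by
`ε e^{L t}`, with `L` above every row sum of `A`, cannot reach a face of the nonnegative orthant,
and then `ε → 0`.
-/

open Matrix Finset Filter Topology

theorem pi_nonneg_on_Icc_of_hasDerivWithinAt_pos {ι : Type*} [Finite ι] {σ : ℝ → ι → ℝ}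
    {a b : ℝ} (hσ : ContinuousOn σ (Set.Icc a b)) (ha : 0 ≤ σ a)
    (hderiv : ∀ x ∈ Set.Ico a b, 0 ≤ σ x → ∀ i, σ x i = 0 →
      ∃ d > 0, HasDerivWithinAt (fun t => σ t i) d (Set.Ici x) x) :
    ∀ t ∈ Set.Icc a b, 0 ≤ σ t := by
  refine IsClosed.Icc_subset_of_forall_mem_nhdsWithin (s := {t | 0 ≤ σ t}) ?_ ha ?_
  · rw [Set.inter_comm]
    exact hσ.preimage_isClosed_of_isClosed isClosed_Icc isClosed_Ici
  rintro x ⟨hx0 : 0 ≤ σ x, hx⟩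
  suffices ∀ i, ∀ᶠ t in 𝓝[>] x, 0 ≤ σ t i from Filter.eventually_all.2 this
  intro i
  rcases (hx0 i).eq_or_lt with hzero | hpos
  · obtain ⟨d, hd, hσi⟩ := hderiv x hx hx0 i hzero.symm
    have hslope : ∀ᶠ t in 𝓝[>] x, 0 < slope (fun t => σ t i) x t :=
      (hasDerivWithinAt_iff_tendsto_slope' Set.self_notMem_Ioi).1 hσi.Ioi_of_Ici |>.eventually
        (lt_mem_nhds hd)
    filter_upwards [hslope, self_mem_nhdsWithin] with t ht hxt
    rw [slope_pos_iff_of_le (le_of_lt hxt), ← hzero] at ht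
    exact ht.le
  · have hcont : ContinuousWithinAt (fun t => σ t i) (Set.Ioi x) x :=
      ((continuous_apply i).comp_continuousOn hσ x
        (Set.Ico_subset_Icc_self hx)).mono_of_mem_nhdsWithin (Icc_mem_nhdsGT_of_mem hx)
    exact (hcont.eventually (lt_mem_nhds hpos)).mono fun t ht => ht.le

section TransitionMatrix

variable {ι : Type*} [Fintype ι] {M : Matrix ι ι ℝ}

theorem mulVec_apply_nonneg_of_offDiag_nonneg (hoff : ∀ i j, i ≠ j → 0 ≤ M i j) {v : ι → ℝ}
    (hv : 0 ≤ v) {i : ι} (hvi : v i = 0) : 0 ≤ (M *ᵥ v) i :=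
  Finset.sum_nonneg fun j _ => by
    rcases eq_or_ne i j with rfl | hij
    · simp [hvi]
    · exact mul_nonneg (hoff i j hij) (hv j)

theorem sum_mulVec_apply_eq (S : Finset ι) (v : ι → ℝ) :
    ∑ i ∈ S, (M *ᵥ v) i = ∑ j, (∑ i ∈ S, M i j) * v j := by
  simp only [mulVec, dotProduct, Finset.sum_mul]
  exact Finset.sum_comm

theorem sum_mulVec_eq_zero (hcol : ∀ j, ∑ i, M i j = 0) (v : ι → ℝ) :
    ∑ i, (M *ᵥ v) i = 0 := by
  simp [sum_mulVec_apply_eq, hcol]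

theorem sum_mulVec_apply_nonpos_of_no_inflow (hoff : ∀ i j, i ≠ j → 0 ≤ M i j)
    (hcol : ∀ j, ∑ i, M i j = 0) {S : Finset ι} (hS : ∀ i ∈ S, ∀ j ∉ S, M i j = 0)
    {v : ι → ℝ} (hv : 0 ≤ v) : ∑ i ∈ S, (M *ᵥ v) i ≤ 0 := by
  classical
  rw [sum_mulVec_apply_eq]
  refine Finset.sum_nonpos fun j _ => ?_
  by_cases hj : j ∈ S
  · have hout : 0 ≤ ∑ i ∈ Sᶜ, M i j := Finset.sum_nonneg fun i hi =>
      hoff i j (ne_of_mem_of_not_mem hj (Finset.mem_compl.1 hi)).symm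
    have hsplit := Finset.sum_add_sum_compl S (M · j)
    rw [hcol j] at hsplit
    exact mul_nonpos_of_nonpos_of_nonneg (by linarith) (hv j)
  · simp [Finset.sum_eq_zero fun i hi => hS i hi j hj]

theorem sum_mulVec_apply_nonneg_of_no_outflow (hoff : ∀ i j, i ≠ j → 0 ≤ M i j)
    (hcol : ∀ j, ∑ i, M i j = 0) {S : Finset ι} (hS : ∀ i ∉ S, ∀ j ∈ S, M i j = 0)
    {v : ι → ℝ} (hv : 0 ≤ v) : 0 ≤ ∑ i ∈ S, (M *ᵥ v) i := by
  classical
  have hcompl : ∑ i ∈ Sᶜ, (M *ᵥ v) i ≤ 0 :=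
    sum_mulVec_apply_nonpos_of_no_inflow hoff hcol
      (fun i hi j hj => hS i (Finset.mem_compl.1 hi) j (by simpa using hj)) hv
  have hsplit := Finset.sum_add_sum_compl S (M *ᵥ v)
  rw [sum_mulVec_eq_zero hcol] at hsplit
  linarith

end TransitionMatrix

theorem nonneg_of_hasDerivWithinAt_mulVec_s8 {ι : Type*} [Fintype ι] {A : ℝ → Matrix ι ι ℝ}
    (hA : Continuous A) (hoff : ∀ t i j, i ≠ j → 0 ≤ A t i j) {t₀ : ℝ} {π : ℝ → ι → ℝ}
    (hπ : ∀ t, t₀ ≤ t → HasDerivWithinAt π (A t *ᵥ π t) (Set.Ici t₀) t) (hπ0 : 0 ≤ π t₀) :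
    ∀ t, t₀ ≤ t → 0 ≤ π t := by
  intro b hb
  obtain ⟨C, hC⟩ := (isCompact_Icc (a := t₀) (b := b)).exists_bound_of_continuousOn
    (hA.matrix_mulVec (continuous_const (y := (1 : ι → ℝ)))).continuousOn
  have hrow : ∀ t ∈ Set.Icc t₀ b, ∀ i, (A t *ᵥ 1) i < C + 1 := fun t ht i =>
    ((Real.le_norm_self _).trans ((norm_le_pi_norm _ i).trans (hC t ht))).trans_lt
      (lt_add_one C)
  suffices ∀ ε > 0, ∀ i, 0 ≤ π b i + ε from
    fun i => le_of_forall_pos_le_add fun ε hε => by simpa using this ε hε i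
  intro ε hε
  set g : ℝ → ℝ := fun t => ε * Real.exp ((C + 1) * (t - b)) with hg
  have hg' : ∀ x, HasDerivAt g (g x * (C + 1)) x := fun x => by
    simpa [hg, mul_assoc] using
      ((((hasDerivAt_id x).sub_const b).const_mul (C + 1)).exp).const_mul ε
  set σ : ℝ → ι → ℝ := fun t i => π t i + g t with hσ
  have hσb : ∀ i, σ b i = π b i + ε := by simp [hσ, hg]
  have hσcont : ContinuousOn σ (Set.Icc t₀ b) := continuousOn_pi.2 fun i =>
    ((continuous_apply i).comp_continuousOn fun t ht =>
      (hπ t ht.1).continuousWithinAt.mono Set.Icc_subset_Ici_self).add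
        (continuous_iff_continuousAt.2 fun x => (hg' x).continuousAt).continuousOn
  have hσ0 : 0 ≤ σ t₀ := fun i => add_nonneg (hπ0 i) (by positivity)
  intro i
  rw [← hσb]
  refine pi_nonneg_on_Icc_of_hasDerivWithinAt_pos hσcont hσ0 ?_ b ⟨hb, le_rfl⟩ i
  intro x hx hσx j hσxj
  refine ⟨(A x *ᵥ π x) j + g x * (C + 1), ?_, ?_⟩
  · have hπx : π x = σ x - g x • 1 := by ext k; simp [hσ]
    have hAσ := mulVec_apply_nonneg_of_offDiag_nonneg (hoff x) hσx hσxj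
    have hgx : 0 < g x := by positivity
    rw [hπx, mulVec_sub, mulVec_smul, Pi.sub_apply, Pi.smul_apply, smul_eq_mul]
    have hlift := mul_lt_mul_of_pos_left (hrow x (Set.Ico_subset_Icc_self hx) j) hgx
    linarith
  · exact ((hasDerivWithinAt_pi.1 (hπ x hx.1) j).mono (Set.Ici_subset_Ici.2 hx.1)).add
      (hg' x).hasDerivWithinAt

theorem HasDerivWithinAt.finset_sum_apply {ι : Type*} {π : ℝ → ι → ℝ} {π' : ι → ℝ}
    {s : Set ℝ} {t : ℝ} (h : HasDerivWithinAt π π' s t) (S : Finset ι) :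
    HasDerivWithinAt (fun t => ∑ i ∈ S, π t i) (∑ i ∈ S, π' i) s t :=
  HasDerivWithinAt.fun_sum fun i _ => hasDerivWithinAt_pi.1 h i

section DerivIci

variable {F F' : ℝ → ℝ} {t₀ : ℝ}

theorem antitoneOn_Ici_of_hasDerivWithinAt_nonpos
    (hF : ∀ t, t₀ ≤ t → HasDerivWithinAt F (F' t) (Set.Ici t₀) t)
    (hF' : ∀ t, t₀ < t → F' t ≤ 0) : AntitoneOn F (Set.Ici t₀) :=
  antitoneOn_of_hasDerivWithinAt_nonpos (convex_Ici t₀)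
    (fun t ht => (hF t ht).continuousWithinAt)
    (fun t ht => by
      rw [interior_Ici] at ht ⊢
      exact (hF t ht.le).mono Set.Ioi_subset_Ici_self)
    fun t ht => hF' t (by rwa [interior_Ici] at ht)

theorem monotoneOn_Ici_of_hasDerivWithinAt_nonneg
    (hF : ∀ t, t₀ ≤ t → HasDerivWithinAt F (F' t) (Set.Ici t₀) t)
    (hF' : ∀ t, t₀ < t → 0 ≤ F' t) : MonotoneOn F (Set.Ici t₀) := by
  simpa using (antitoneOn_Ici_of_hasDerivWithinAt_nonpos (fun t ht => (hF t ht).neg)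
    fun t ht => neg_nonpos.2 (hF' t ht)).neg

end DerivIci

section MasterEquation

variable {ι : Type*} [Fintype ι] {A : ℝ → Matrix ι ι ℝ} {t₀ : ℝ} {π : ℝ → ι → ℝ}

theorem antitoneOn_sum_of_no_inflow (hoff : ∀ t i j, i ≠ j → 0 ≤ A t i j)
    (hcol : ∀ t j, ∑ i, A t i j = 0)
    (hπ : ∀ t, t₀ ≤ t → HasDerivWithinAt π (A t *ᵥ π t) (Set.Ici t₀) t)
    (hnn : ∀ t, t₀ ≤ t → 0 ≤ π t) {S : Finset ι} (hS : ∀ t, ∀ i ∈ S, ∀ j ∉ S, A t i j = 0) :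
    AntitoneOn (fun t => ∑ i ∈ S, π t i) (Set.Ici t₀) :=
  antitoneOn_Ici_of_hasDerivWithinAt_nonpos (fun t ht => (hπ t ht).finset_sum_apply S)
    fun t ht => sum_mulVec_apply_nonpos_of_no_inflow (hoff t) (hcol t) (hS t) (hnn t ht.le)

theorem monotoneOn_sum_of_no_outflow (hoff : ∀ t i j, i ≠ j → 0 ≤ A t i j)
    (hcol : ∀ t j, ∑ i, A t i j = 0)
    (hπ : ∀ t, t₀ ≤ t → HasDerivWithinAt π (A t *ᵥ π t) (Set.Ici t₀) t)
    (hnn : ∀ t, t₀ ≤ t → 0 ≤ π t) {S : Finset ι} (hS : ∀ t, ∀ i ∉ S, ∀ j ∈ S, A t i j = 0) :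
    MonotoneOn (fun t => ∑ i ∈ S, π t i) (Set.Ici t₀) :=
  monotoneOn_Ici_of_hasDerivWithinAt_nonneg (fun t ht => (hπ t ht).finset_sum_apply S)
    fun t ht => sum_mulVec_apply_nonneg_of_no_outflow (hoff t) (hcol t) (hS t) (hnn t ht.le)

end MasterEquation

theorem cme_level_tail_monotonicity_general
    {ι : Type*} [Fintype ι]
    (A : ℝ → Matrix ι ι ℝ) (hA : Continuous A)
    (hoff : ∀ (t : ℝ) (i j : ι), i ≠ j → 0 ≤ A t i j)
    (hcol : ∀ (t : ℝ) (j : ι), ∑ i, A t i j = 0)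
    (f : ι → ℕ)
    (hlevel : ∀ (t : ℝ) (i j : ι), i ≠ j → f j < f i → A t i j = 0)
    (t₀ : ℝ) (π : ℝ → ι → ℝ)
    (hπ : ∀ t : ℝ, t₀ ≤ t → HasDerivWithinAt π (A t *ᵥ π t) (Set.Ici t₀) t)
    (hπ0 : ∀ i : ι, 0 ≤ π t₀ i) :
    ∀ n₀ : ℕ,
      AntitoneOn (fun t => ∑ i ∈ univ.filter (fun i => n₀ ≤ f i), π t i) (Set.Ici t₀)
      ∧ MonotoneOn (fun t => ∑ i ∈ univ.filter (fun i => f i ≤ n₀), π t i) (Set.Ici t₀) := by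
  intro n₀
  have hnn := nonneg_of_hasDerivWithinAt_mulVec_s8 hA hoff hπ hπ0
  have hdown : ∀ t i j, f j < f i → A t i j = 0 := fun t i j hji =>
    hlevel t i j (fun hij => (hij ▸ hji).false) hji
  constructor
  · refine antitoneOn_sum_of_no_inflow hoff hcol hπ hnn fun t i hi j hj => hdown t i j ?_
    simp only [mem_filter, mem_univ, true_and, not_le] at hi hj
    omega
  · refine monotoneOn_sum_of_no_outflow hoff hcol hπ hnn fun t i hi j hj => hdown t i j ?_
    simp only [mem_filter, mem_univ, true_and, not_le] at hi hj
    omega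

/-- Monotonicity of level tails for a master equation whose transitions never increase
the level `f`: the upper-tail probability `∑_{f(i) ≥ n₀} π_i(t)` is nonincreasing in `t`
and the lower-tail probability `∑_{f(i) ≤ n₀} π_i(t)` is nondecreasing in `t`. -/
theorem cme_level_tail_monotonicity
    {ι : Type*} [Fintype ι] [DecidableEq ι]
    (A : ℝ → Matrix ι ι ℝ) (hA : Continuous A)
    (hoff : ∀ (t : ℝ) (i j : ι), i ≠ j → 0 ≤ A t i j)
    (hcol : ∀ (t : ℝ) (j : ι), ∑ i, A t i j = 0)
    (f : ι → ℕ)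
    (hlevel : ∀ (t : ℝ) (i j : ι), i ≠ j → f j < f i → A t i j = 0)
    (t₀ : ℝ) (π : ℝ → ι → ℝ)
    (hπ : ∀ t : ℝ, t₀ ≤ t → HasDerivWithinAt π (A t *ᵥ π t) (Set.Ici t₀) t)
    (hπ0 : ∀ i : ι, 0 ≤ π t₀ i) :
    ∀ n₀ : ℕ,
      AntitoneOn (fun t => ∑ i ∈ univ.filter (fun i => n₀ ≤ f i), π t i) (Set.Ici t₀)
      ∧ MonotoneOn (fun t => ∑ i ∈ univ.filter (fun i => f i ≤ n₀), π t i) (Set.Ici t₀) :=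
  cme_level_tail_monotonicity_general A hA hoff hcol f hlevel t₀ π hπ hπ0
end

section
/- Let n ∈ ℕ with n ≥ 1, let p ∈ (0, 1), and let m ∈ ℕ with 1 ≤ m ≤ n·p and m < n. Then ∑_{m'=0}^{m} (n choose m') p^{m'} (1−p)^{n−m'} ≥ (1/√(2n)) · exp(−n · D(m/n ‖ p)), where D(a ‖ b) = a·ln(a/b) + (1−a)·ln((1−a)/(1−b)) denotes the Kullback-Leibler divergence in nats between Bernoulli(a) and Bernoulli(b). -/
/-
The tail is at least its last term `C(n,m) p^m (1-p)^k` with `k = n - m`, and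
`exp (-n D(m/n ‖ p)) = (np/m)^m (n(1-p)/k)^k`, so it suffices that
`C(n,m) ≥ n^n / (√(2n) m^m k^k)`. Writing `j! = s_j √(2j) (j/e)^j` with the Stirling sequence `s`,
this becomes `s_m s_k √(mk) ≤ s_n n`. Since `s` decreases from `s_1 = e/√2` to `√π`, this
follows from `s_n ≥ √π`, `s_j ≤ s_2 = e²/4` for `j ≥ 2` and `√(mk) ≤ n/2`, except when `m` or `k`
is `1`, where the numerical margin is thinner (and `m = k = 1` is an equality).
-/

open Finset Real Stirling
open scoped Nat

namespace Stirling

theorem stirlingSeq_le_of_le {i j : ℕ} (hi : i ≠ 0) (hij : i ≤ j) :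
    stirlingSeq j ≤ stirlingSeq i := by
  obtain ⟨i, rfl⟩ := Nat.exists_eq_succ_of_ne_zero hi
  obtain ⟨j, rfl⟩ := Nat.exists_eq_succ_of_ne_zero (by omega : j ≠ 0)
  exact stirlingSeq'_antitone (Nat.succ_le_succ_iff.mp hij)

theorem stirlingSeq_one_sq : stirlingSeq 1 ^ 2 = exp 1 ^ 2 / 2 := by
  rw [stirlingSeq_one, div_pow, sq_sqrt zero_le_two]

theorem stirlingSeq_two : stirlingSeq 2 = exp 1 ^ 2 / 4 := by
  have h4 : √(2 * 2 : ℝ) = 2 := by rw [show (2 * 2 : ℝ) = 2 ^ 2 by norm_num, sqrt_sq zero_le_two]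
  rw [stirlingSeq]
  push_cast
  rw [h4, Nat.factorial_two]
  field_simp
  norm_num

theorem stirlingSeq_pos {n : ℕ} (hn : n ≠ 0) : 0 < stirlingSeq n :=
  (sqrt_pos.mpr pi_pos).trans_le (sqrt_pi_le_stirlingSeq hn)

theorem pi_le_stirlingSeq_sq {n : ℕ} (hn : n ≠ 0) : π ≤ stirlingSeq n ^ 2 := by
  calc π = √π ^ 2 := (sq_sqrt pi_pos.le).symm
    _ ≤ stirlingSeq n ^ 2 := by gcongr; exact sqrt_pi_le_stirlingSeq hn

theorem stirlingSeq_sq_le_of_two_le {n : ℕ} (hn : 2 ≤ n) : stirlingSeq n ^ 2 ≤ exp 1 ^ 4 / 16 := by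
  calc stirlingSeq n ^ 2 ≤ stirlingSeq 2 ^ 2 := by
        gcongr
        · exact (stirlingSeq_pos (by omega)).le
        · exact stirlingSeq_le_of_le two_ne_zero hn
    _ = exp 1 ^ 4 / 16 := by rw [stirlingSeq_two]; ring

theorem factorial_eq_stirlingSeq_mul {n : ℕ} (hn : n ≠ 0) :
    (n ! : ℝ) = stirlingSeq n * √(2 * n) * (n / exp 1) ^ n := by
  rw [stirlingSeq, mul_assoc, div_mul_cancel₀]
  positivity

theorem stirlingSeq_sq_mul_stirlingSeq_sq_mul_le {m k : ℕ} (hm : m ≠ 0) (hk : k ≠ 0) :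
    stirlingSeq m ^ 2 * stirlingSeq k ^ 2 * (m * k) ≤ stirlingSeq (m + k) ^ 2 * (m + k) ^ 2 := by
  wlog hmk : m ≤ k generalizing m k
  · have := this hk hm (by omega)
    rw [add_comm k m] at this
    linarith
  have he (j : ℕ) (hj : j ≠ 0) : exp 1 ^ j < 2.7182818286 ^ j :=
    pow_lt_pow_left₀ exp_one_lt_d9 (exp_pos 1).le hj
  have hpi : π * (m + k) ^ 2 ≤ stirlingSeq (m + k) ^ 2 * (m + k) ^ 2 := by
    gcongr; exact pi_le_stirlingSeq_sq (by omega)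
  have hpi3 := pi_gt_three
  obtain rfl | hm2 : m = 1 ∨ 2 ≤ m := by omega
  · push_cast at hpi ⊢
    obtain rfl | hk2 : k = 1 ∨ 2 ≤ k := by omega
    · rw [show 1 + 1 = 2 from rfl, stirlingSeq_two, stirlingSeq_one_sq]
      exact le_of_eq (by ring)
    · have hk2' : (2 : ℝ) ≤ k := by exact_mod_cast hk2
      have he6 := he 6 (by norm_num)
      calc stirlingSeq 1 ^ 2 * stirlingSeq k ^ 2 * (1 * k)
          ≤ exp 1 ^ 2 / 2 * (exp 1 ^ 4 / 16) * (k : ℝ) := by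
            rw [stirlingSeq_one_sq, one_mul]; gcongr; exact stirlingSeq_sq_le_of_two_le hk2
        _ ≤ 3 * (1 + (k : ℝ)) ^ 2 := by nlinarith
        _ ≤ π * (1 + (k : ℝ)) ^ 2 := by gcongr
        _ ≤ _ := hpi
  · have he8 := he 8 (by norm_num)
    calc stirlingSeq m ^ 2 * stirlingSeq k ^ 2 * (m * k)
        ≤ exp 1 ^ 4 / 16 * (exp 1 ^ 4 / 16) * (((m : ℝ) + k) ^ 2 / 4) := by
          gcongr
          · exact stirlingSeq_sq_le_of_two_le hm2
          · exact stirlingSeq_sq_le_of_two_le (hm2.trans hmk)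
          · nlinarith [sq_nonneg ((m : ℝ) - k)]
      _ = exp 1 ^ 8 / 1024 * ((m : ℝ) + k) ^ 2 := by ring
      _ ≤ 3 * ((m : ℝ) + k) ^ 2 := by gcongr; linarith
      _ ≤ π * ((m : ℝ) + k) ^ 2 := by gcongr
      _ ≤ _ := hpi

theorem stirlingSeq_mul_sqrt_mul_stirlingSeq_mul_sqrt_le {m k : ℕ} (hm : m ≠ 0) (hk : k ≠ 0) :
    stirlingSeq m * √(2 * m) * (stirlingSeq k * √(2 * k)) ≤
      stirlingSeq (m + k) * √(2 * (m + k : ℕ)) * √(2 * (m + k : ℕ)) := by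
  have hsq := stirlingSeq_sq_mul_stirlingSeq_sq_mul_le hm hk
  rw [mul_assoc (stirlingSeq (m + k)), mul_self_sqrt (by positivity)]
  have := stirlingSeq_pos (n := m + k) (by omega)
  refine le_of_pow_le_pow_left₀ two_ne_zero (by positivity) ?_
  calc (stirlingSeq m * √(2 * m) * (stirlingSeq k * √(2 * k))) ^ 2
      = 4 * (stirlingSeq m ^ 2 * stirlingSeq k ^ 2 * (m * k)) := by
        rw [mul_pow, mul_pow, mul_pow, sq_sqrt (by positivity), sq_sqrt (by positivity)]; ring
    _ ≤ 4 * (stirlingSeq (m + k) ^ 2 * (m + k) ^ 2) := by gcongr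
    _ = _ := by push_cast; ring

end Stirling

theorem pow_div_le_choose {n m k : ℕ} (hmk : m + k = n) (hm : m ≠ 0) (hk : k ≠ 0) :
    (n : ℝ) ^ n / (√(2 * n) * m ^ m * k ^ k) ≤ n.choose m := by
  have hs (j : ℕ) (hj : j ≠ 0) : 0 < stirlingSeq j * √(2 * j) := by
    have := stirlingSeq_pos hj
    have : (0 : ℝ) < j := by positivity
    positivity
  have hn : (0 : ℝ) < n := by exact_mod_cast (by omega : 0 < n)
  calc (n : ℝ) ^ n / (√(2 * n) * m ^ m * k ^ k)
      = 1 / √(2 * n) * (n ^ n / (m ^ m * k ^ k)) := by ring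
    _ ≤ stirlingSeq n * √(2 * n) / (stirlingSeq m * √(2 * m) * (stirlingSeq k * √(2 * k))) *
          (n ^ n / (m ^ m * k ^ k)) := by
        refine mul_le_mul_of_nonneg_right ?_ (by positivity)
        rw [div_le_div_iff₀ (by positivity) (mul_pos (hs m hm) (hs k hk))]
        simpa [hmk] using stirlingSeq_mul_sqrt_mul_stirlingSeq_mul_sqrt_le hm hk
    _ = n.choose m := by
        rw [Nat.cast_choose ℝ (by omega : m ≤ n), show n - m = k by omega,
          factorial_eq_stirlingSeq_mul hm, factorial_eq_stirlingSeq_mul hk,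
          factorial_eq_stirlingSeq_mul (by omega), div_pow, div_pow, div_pow, ← hmk, pow_add (rexp 1)]
        field_simp

theorem exp_neg_mul_bernoulli_klDiv {n m k : ℕ} (hmk : m + k = n) (hm : m ≠ 0) (hk : k ≠ 0)
    {p : ℝ} (hp0 : 0 < p) (hp1 : p < 1) :
    rexp (-(n : ℝ) * (m / n * log (m / n / p) + (1 - m / n) * log ((1 - m / n) / (1 - p)))) =
      (n * p / m) ^ m * (n * (1 - p) / k) ^ k := by
  have hm' : (0 : ℝ) < m := by positivity
  have hk' : (0 : ℝ) < k := by positivity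
  have hn : (n : ℝ) = m + k := by rw [← hmk]; push_cast; ring
  have hn0 : (0 : ℝ) < n := by rw [hn]; positivity
  have hq : 0 < 1 - p := by linarith
  have h1 : (1 : ℝ) - m / n = k / n := by rw [hn]; field_simp; ring
  have hlog (x y : ℝ) (hx : 0 < x) (hy : 0 < y) :
      log (x / n / y) = -log (n * y / x) := by
    rw [← log_inv]; congr 1; field_simp
  rw [h1, hlog _ _ hm' hp0, hlog _ _ hk' hq,
    show -(n : ℝ) * (m / n * -log (n * p / m) + k / n * -log (n * (1 - p) / k)) =
      m * log (n * p / m) + k * log (n * (1 - p) / k) by field_simp; ring,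
    exp_add, exp_nat_mul, exp_nat_mul, exp_log (by positivity), exp_log (by positivity)]

theorem binomial_lower_tail_lower_bound_general
    (n : ℕ) (p : ℝ) (hp0 : 0 < p) (hp1 : p < 1)
    (m : ℕ) (hm1 : 1 ≤ m) (hmn : m < n)
    (D : ℝ → ℝ → ℝ)
    (hD : ∀ a b : ℝ, D a b = a * Real.log (a / b) + (1 - a) * Real.log ((1 - a) / (1 - b))) :
    (1 / Real.sqrt (2 * n)) * Real.exp (-(n : ℝ) * D ((m : ℝ) / n) p)
      ≤ ∑ m' ∈ range (m + 1), (n.choose m' : ℝ) * p ^ m' * (1 - p) ^ (n - m') := by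
  set k := n - m
  have hmk : m + k = n := by omega
  have hm : m ≠ 0 := by omega
  have hk : k ≠ 0 := by omega
  calc 1 / √(2 * n) * rexp (-(n : ℝ) * D (m / n) p)
      = 1 / √(2 * n) * ((n * p / m) ^ m * (n * (1 - p) / k) ^ k) := by
        rw [hD, exp_neg_mul_bernoulli_klDiv hmk hm hk hp0 hp1]
    _ = (n : ℝ) ^ (m + k) / (√(2 * n) * m ^ m * k ^ k) * (p ^ m * (1 - p) ^ k) := by
        rw [div_pow, div_pow, mul_pow, mul_pow, pow_add]; ring
    _ ≤ n.choose m * (p ^ m * (1 - p) ^ k) := by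
        rw [hmk]; gcongr; exact pow_div_le_choose hmk hm hk
    _ ≤ ∑ m' ∈ range (m + 1), (n.choose m' : ℝ) * p ^ m' * (1 - p) ^ (n - m') := by
        rw [← mul_assoc]
        exact single_le_sum (f := fun j ↦ (n.choose j : ℝ) * p ^ j * (1 - p) ^ (n - j))
          (fun j _ ↦ by have := hp1.le; positivity) (self_mem_range_succ m)

/-- Lower bound on the binomial lower tail: for `1 ≤ m ≤ np`, `m < n`,
`∑_{m'=0}^{m} C(n,m') p^{m'} (1-p)^{n-m'} ≥ (2n)^{-1/2} exp(-n D(m/n ‖ p))`. -/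
theorem binomial_lower_tail_lower_bound
    (n : ℕ) (hn : 1 ≤ n) (p : ℝ) (hp0 : 0 < p) (hp1 : p < 1)
    (m : ℕ) (hm1 : 1 ≤ m) (hm : (m : ℝ) ≤ n * p) (hmn : m < n)
    (D : ℝ → ℝ → ℝ)
    (hD : ∀ a b : ℝ, D a b = a * Real.log (a / b) + (1 - a) * Real.log ((1 - a) / (1 - b))) :
    (1 / Real.sqrt (2 * n)) * Real.exp (-(n : ℝ) * D ((m : ℝ) / n) p)
      ≤ ∑ m' ∈ range (m + 1), (n.choose m' : ℝ) * p ^ m' * (1 - p) ^ (n - m') :=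
  binomial_lower_tail_lower_bound_general n p hp0 hp1 m hm1 hmn D hD
end
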